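/- A Wang tile set W admits a y-recurrent ℕ²-tiling if and only if it admits a periodic ℤ²-tiling. -/

import Mathlib

/-- A Wang tile over a set of colors `C`. -/
structure WangTile (C : Type*) where
  west : C
  south : C
  east : C
  north : C
deriving DecidableEq

variable {C : Type*}

/-- `f` is a valid tiling of the discrete plane `ℤ²` by the tile set `W`. -/
def IsZTiling (W : Finset (WangTile C)) (f : ℤ × ℤ → WangTile C) : Prop :=
  ∀ x y : ℤ, f (x, y) ∈ W ∧ (f (x, y)).east = (f (x + 1, y)).west ∧
    (f (x, y)).north = (f (x, y + 1)).south

/-- `g` is a valid tiling of the first quadrant `ℕ²` by the tile set `W`. -/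
def IsNTiling (W : Finset (WangTile C)) (g : ℕ × ℕ → WangTile C) : Prop :=
  ∀ x y : ℕ, g (x, y) ∈ W ∧ (g (x, y)).east = (g (x + 1, y)).west ∧
    (g (x, y)).north = (g (x, y + 1)).south

/-- A `ℤ²`-tiling is periodic if it has a nonzero periodicity vector. -/
def PeriodicTiling (f : ℤ × ℤ → WangTile C) : Prop :=
  ∃ v : ℤ × ℤ, v ≠ 0 ∧ ∀ t : ℤ × ℤ, f (t + v) = f t

/-- An `ℕ²`-tiling is y-recurrent if two distinct rows have the same horizontal word
(sequence of south colors). -/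
def YRecurrent (g : ℕ × ℕ → WangTile C) : Prop :=
  ∃ i j : ℕ, i ≠ j ∧ ∀ x : ℕ, (g (x, i)).south = (g (x, j)).south

/-!
In a y-recurrent `ℕ²`-tiling the rows `i < j` carry the same word, and by pigeonhole two columns
`x₀ < x₁` of the strip between them coincide; the rectangle `[x₀, x₁) × [i, j)` then tiles the
plane periodically. Conversely, a tiling with period `(a, b)`, `b ≠ 0`, is determined by the strip
`ℤ × [0, b)`. By pigeonhole this strip repeats, with some period `p > |a|`, on a window of width
`2|a| + 1`, which is enough to wrap the strip around `[x₀, x₀ + p)` and stack shifted copies of it: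
the result is a tiling with period `(p, 0)`. Such a tiling has finitely many distinct rows, so two
of them agree and its restriction to `ℕ²` is y-recurrent.
-/

open Function Set

theorem exists_lt_eq_of_forall_mem_finset {ι β : Type*} [Finite ι] (W : Finset β) (φ : ℕ → ι → β)
    (hφ : ∀ n i, φ n i ∈ W) : ∃ m n, m < n ∧ φ m = φ n :=
  Set.Finite.exists_lt_map_eq_of_forall_mem (t := univ.pi fun _ => (W : Set β))
    (fun n i _ => hφ n i) (Set.Finite.pi fun _ => W.finite_toSet)

/-- Reduction into `[x₀, x₀ + p)` preserves a relation between positions at distance `d`, provided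
`c` repeats with period `p` on the stretch between `x₀` and `x₀ + d`, which is where the
reduction of `u + d` jumps by `p`. -/
theorem rel_toIcoMod_add {β : Type*} {R : ℤ → β → Prop} {c : ℤ → β} {p x₀ d : ℤ} (hp : 0 < p)
    (hd : |d| ≤ p) (hR : ∀ u, x₀ ≤ u → u < x₀ + p → R u (c (u + d)))
    (hc : ∀ w, min x₀ (x₀ + d) ≤ w → w < max x₀ (x₀ + d) → c (w + p) = c w) (z : ℤ) :
    R (toIcoMod hp x₀ z) (c (toIcoMod hp x₀ (z + d))) := by
  have hshift : toIcoMod hp x₀ (z + d) = toIcoMod hp x₀ (toIcoMod hp x₀ z + d) := by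
    rw [toIcoMod_add_right_eq_add, toIcoMod_add_right_eq_add hp x₀ (toIcoMod hp x₀ z),
      toIcoMod_toIcoMod]
  obtain ⟨hu₀, hu₁⟩ := toIcoMod_mem_Ico hp x₀ z
  rw [hshift]
  generalize toIcoMod hp x₀ z = u at *
  obtain ⟨hd₀, hd₁⟩ := abs_le.mp hd
  rcases lt_or_ge (u + d) x₀ with hlo | hlo
  · have hwrap : toIcoMod hp x₀ (u + d) = u + d + p :=
      (toIcoMod_eq_iff hp).2 ⟨⟨by omega, by omega⟩, -1, by simp⟩
    rw [hwrap, hc (u + d) (by omega) (by omega)]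
    exact hR u hu₀ hu₁
  rcases lt_or_ge (u + d) (x₀ + p) with hhi | hhi
  · rw [(toIcoMod_eq_self hp).2 ⟨hlo, hhi⟩]
    exact hR u hu₀ hu₁
  · have hwrap : toIcoMod hp x₀ (u + d) = u + d - p :=
      (toIcoMod_eq_iff hp).2 ⟨⟨by omega, by omega⟩, 1, by simp⟩
    have hper := hc (u + d - p) (by omega) (by omega)
    rw [sub_add_cancel] at hper
    rw [hwrap, ← hper]
    exact hR u hu₀ hu₁

theorem Int.ediv_emod_add_one {b : ℤ} (hb : 0 < b) (y : ℤ) :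
    ((y + 1) / b = y / b ∧ (y + 1) % b = y % b + 1) ∨
      (y % b = b - 1 ∧ (y + 1) / b = y / b + 1 ∧ (y + 1) % b = 0) := by
  have hdiv := Int.emod_add_mul_ediv y b
  have h₀ := Int.emod_nonneg y hb.ne'
  have h₁ := Int.emod_lt_of_pos y hb
  rcases lt_or_eq_of_le (show y % b + 1 ≤ b by omega) with hlt | heq
  · exact Or.inl ((Int.ediv_emod_unique hb).2 ⟨by linarith, by omega, hlt⟩)
  · refine Or.inr ⟨by omega, (Int.ediv_emod_unique hb).2 ⟨?_, le_rfl, hb⟩⟩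
    linear_combination hdiv - heq

section

variable {W : Finset (WangTile C)}

theorem YRecurrent.exists_lt {g : ℕ × ℕ → WangTile C} (h : YRecurrent g) :
    ∃ i j, i < j ∧ ∀ x, (g (x, j)).south = (g (x, i)).south := by
  obtain ⟨i, j, hij, hrow⟩ := h
  rcases hij.lt_or_gt with hlt | hlt
  · exact ⟨i, j, hlt, fun x => (hrow x).symm⟩
  · exact ⟨j, i, hlt, hrow⟩

theorem IsNTiling.east_toNat {g : ℕ × ℕ → WangTile C} (hg : IsNTiling W g) {u : ℤ} (hu : 0 ≤ u)
    (v : ℕ) : (g (u.toNat, v)).east = (g ((u + 1).toNat, v)).west := by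
  rw [show (u + 1).toNat = u.toNat + 1 by omega]
  exact (hg _ _).2.1

theorem IsNTiling.north_toNat {g : ℕ × ℕ → WangTile C} (hg : IsNTiling W g) (x : ℕ) {v : ℤ}
    (hv : 0 ≤ v) : (g (x, v.toNat)).north = (g (x, (v + 1).toNat)).south := by
  rw [show (v + 1).toNat = v.toNat + 1 by omega]
  exact (hg _ _).2.2

theorem IsNTiling.isZTiling_wrap {g : ℕ × ℕ → WangTile C} (hg : IsNTiling W g) {x₀ x₁ y₀ y₁ : ℕ}
    (hx : (0 : ℤ) < x₁ - x₀) (hy : (0 : ℤ) < y₁ - y₀)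
    (hcol : ∀ y, y₀ ≤ y → y < y₁ → g (x₁, y) = g (x₀, y))
    (hrow : ∀ x, (g (x, y₁)).south = (g (x, y₀)).south) :
    IsZTiling W fun t => g ((toIcoMod hx x₀ t.1).toNat, (toIcoMod hy y₀ t.2).toNat) := by
  intro x y
  obtain ⟨hy₀, hy₁⟩ := toIcoMod_mem_Ico hy y₀ y
  refine ⟨(hg _ _).1, ?_, ?_⟩
  · refine rel_toIcoMod_add hx (x₀ := x₀)
      (R := fun u t => (g (u.toNat, (toIcoMod hy y₀ y).toNat)).east = t.west)
      (c := fun w => g (w.toNat, (toIcoMod hy y₀ y).toNat)) (by simp; omega)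
      (fun u hu _ => hg.east_toNat (by omega) _) (fun w h₁ h₂ => ?_) x
    obtain rfl : w = x₀ := by omega
    rw [show ((x₀ : ℤ) + (x₁ - x₀)).toNat = x₁ by omega, Int.toNat_natCast]
    exact hcol _ (by omega) (by omega)
  · refine rel_toIcoMod_add hy (x₀ := y₀)
      (R := fun v t => (g ((toIcoMod hx x₀ x).toNat, v.toNat)).north = t)
      (c := fun w => (g ((toIcoMod hx x₀ x).toNat, w.toNat)).south) (by simp; omega)
      (fun v hv _ => hg.north_toNat _ (by omega)) (fun w h₁ h₂ => ?_) y
    obtain rfl : w = y₀ := by omega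
    rw [show ((y₀ : ℤ) + (y₁ - y₀)).toNat = y₁ by omega, Int.toNat_natCast]
    exact hrow _

theorem IsNTiling.exists_periodic_of_yRecurrent {g : ℕ × ℕ → WangTile C} (hg : IsNTiling W g)
    (hrec : YRecurrent g) : ∃ f : ℤ × ℤ → WangTile C, IsZTiling W f ∧ PeriodicTiling f := by
  obtain ⟨i, j, hij, hrow⟩ := hrec.exists_lt
  obtain ⟨x₀, x₁, hx, hcol⟩ := exists_lt_eq_of_forall_mem_finset W
    (fun x (r : Ico i j) => g (x, r)) fun _ _ => (hg _ _).1
  have hx' : (0 : ℤ) < x₁ - x₀ := by omega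
  have hy' : (0 : ℤ) < j - i := by omega
  refine ⟨_, hg.isZTiling_wrap hx' hy' (fun y hy₀ hy₁ => (congrFun hcol ⟨y, hy₀, hy₁⟩).symm) hrow,
    (0, j - i), by simp; omega, fun t => ?_⟩
  simp only [Prod.fst_add, Prod.snd_add, add_zero, toIcoMod_add_right]

theorem IsZTiling.restrict {f : ℤ × ℤ → WangTile C} (hf : IsZTiling W f) :
    IsNTiling W fun t => f (t.1, t.2) := fun x y => by
  simpa only [Nat.cast_add, Nat.cast_one] using hf x y

theorem IsZTiling.exists_yRecurrent_of_periodic {f : ℤ × ℤ → WangTile C} (hf : IsZTiling W f)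
    {p : ℤ} (hp : 0 < p) (hper : Periodic f (p, 0)) :
    ∃ g : ℕ × ℕ → WangTile C, IsNTiling W g ∧ YRecurrent g := by
  have hreduce : ∀ x y, f (toIcoMod hp 0 x, y) = f (x, y) := fun x y => by
    simpa [toIcoMod] using hper.sub_zsmul_eq (toIcoDiv hp 0 x) (x := (x, y))
  obtain ⟨y₁, y₂, hlt, hrows⟩ := exists_lt_eq_of_forall_mem_finset W
    (fun (y : ℕ) (k : Ico (0 : ℤ) p) => f (k, y)) fun _ _ => (hf _ _).1
  refine ⟨_, hf.restrict, y₁, y₂, hlt.ne, fun x => ?_⟩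
  have hx := congrFun hrows ⟨toIcoMod hp 0 x, by simpa using toIcoMod_mem_Ico hp 0 x⟩
  simp only [hreduce] at hx
  exact congrArg WangTile.south hx

/-- If `f` has period `(a, b)` then `f (x, y) = f (x - a * (y / b), y % b)`: `f` is determined by
the strip `ℤ × [0, b)`. Replacing the column index of that strip by its representative in
`[x₀, x₀ + p)` gives a configuration with period `(p, 0)`. -/
noncomputable def stackStrip (f : ℤ × ℤ → WangTile C) (a b x₀ : ℤ) {p : ℤ} (hp : 0 < p) :
    ℤ × ℤ → WangTile C :=
  fun t => f (toIcoMod hp x₀ (t.1 - a * (t.2 / b)), t.2 % b)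

theorem stackStrip_periodic (f : ℤ × ℤ → WangTile C) (a b x₀ : ℤ) {p : ℤ} (hp : 0 < p) :
    Periodic (stackStrip f a b x₀ hp) (p, 0) := fun t => by
  simp only [stackStrip, Prod.fst_add, Prod.snd_add, add_zero, add_sub_right_comm,
    toIcoMod_add_right]

theorem isZTiling_stackStrip {f : ℤ × ℤ → WangTile C} (hf : IsZTiling W f) {a b x₀ p : ℤ}
    (hb : 0 < b) (hper : Periodic f (a, b)) (hp : 0 < p) (hap : |a| ≤ p)
    (hwin : ∀ w r, |w - x₀| ≤ |a| → 0 ≤ r → r < b → f (w + p, r) = f (w, r)) :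
    IsZTiling W (stackStrip f a b x₀ hp) := by
  intro x y
  have hr₀ := Int.emod_nonneg y hb.ne'
  have hr₁ := Int.emod_lt_of_pos y hb
  refine ⟨(hf _ _).1, ?_, ?_⟩
  · simp only [stackStrip]
    rw [show x + 1 - a * (y / b) = x - a * (y / b) + 1 by ring]
    refine rel_toIcoMod_add hp (R := fun u t => (f (u, y % b)).east = t.west)
      (c := fun w => f (w, y % b)) (by simp; omega) (fun u _ _ => (hf u _).2.1)
      (fun w h₁ h₂ => hwin w _ ?_ hr₀ hr₁) _
    obtain rfl : w = x₀ := by omega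
    simp
  · simp only [stackStrip]
    rcases Int.ediv_emod_add_one hb y with ⟨hq, hr⟩ | ⟨hr, hq, hr'⟩
    · rw [hq, hr]
      exact (hf _ _).2.2
    rw [hq, hr', hr, show x - a * (y / b + 1) = x - a * (y / b) + -a by ring]
    refine rel_toIcoMod_add hp (R := fun u t => (f (u, b - 1)).north = t.south)
      (c := fun w => f (w, 0)) (d := -a) (by rwa [abs_neg]) (fun u _ _ => ?_)
      (fun w h₁ h₂ => hwin w 0 ?_ le_rfl hb) _
    · have hshift := hper (u + -a, 0)
      simp only [Prod.mk_add_mk, neg_add_cancel_right, zero_add] at hshift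
      simpa [hshift] using (hf u (b - 1)).2.2
    · have := le_abs_self a
      have := neg_abs_le a
      rw [abs_le]
      omega

theorem IsZTiling.exists_window_repeat {f : ℤ × ℤ → WangTile C} (hf : IsZTiling W f) {m : ℤ}
    (hm : 0 ≤ m) (b : ℤ) :
    ∃ x₀ p, m < p ∧ ∀ w r, |w - x₀| ≤ m → 0 ≤ r → r < b → f (w + p, r) = f (w, r) := by
  obtain ⟨n₁, n₂, hn, hwin⟩ := exists_lt_eq_of_forall_mem_finset W
    (fun (n : ℕ) (k : Icc (-m) m × Ico 0 b) => f (n * (m + 1) + k.1, k.2)) fun _ _ => (hf _ _).1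
  refine ⟨n₁ * (m + 1), (n₂ - n₁) * (m + 1), ?_, fun w r hw hr₀ hr₁ => ?_⟩
  · have : (1 : ℤ) ≤ n₂ - n₁ := by omega
    nlinarith
  · have := congrFun hwin ⟨⟨w - n₁ * (m + 1), abs_le.1 hw⟩, ⟨r, hr₀, hr₁⟩⟩
    simp only at this
    convert this.symm using 3 <;> ring

theorem IsZTiling.exists_periodic_horizontal_of_pos {f : ℤ × ℤ → WangTile C}
    (hf : IsZTiling W f) {a b : ℤ} (hb : 0 < b) (hper : Periodic f (a, b)) :
    ∃ f' : ℤ × ℤ → WangTile C, ∃ p, 0 < p ∧ IsZTiling W f' ∧ Periodic f' (p, 0) := by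
  obtain ⟨x₀, p, hap, hwin⟩ := hf.exists_window_repeat (abs_nonneg a) b
  have hp : 0 < p := (abs_nonneg a).trans_lt hap
  exact ⟨_, p, hp, isZTiling_stackStrip hf hb hper hp hap.le hwin, stackStrip_periodic f a b x₀ hp⟩

theorem IsZTiling.exists_periodic_horizontal {f : ℤ × ℤ → WangTile C} (hf : IsZTiling W f)
    (hper : PeriodicTiling f) :
    ∃ f' : ℤ × ℤ → WangTile C, ∃ p, 0 < p ∧ IsZTiling W f' ∧ Periodic f' (p, 0) := by
  obtain ⟨⟨a, b⟩, hv, hab⟩ := hper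
  change Periodic f (a, b) at hab
  rcases lt_trichotomy b 0 with hb | rfl | hb
  · exact hf.exists_periodic_horizontal_of_pos (a := -a) (neg_pos.2 hb) hab.neg
  · rcases lt_trichotomy a 0 with ha | rfl | ha
    · exact ⟨f, -a, neg_pos.2 ha, hf, by simpa using hab.neg⟩
    · exact absurd rfl hv
    · exact ⟨f, a, ha, hf, hab⟩
  · exact hf.exists_periodic_horizontal_of_pos hb hab

end

/-- A Wang tile set admits a y-recurrent `ℕ²`-tiling iff it admits a periodic `ℤ²`-tiling. -/
theorem stmt9 (W : Finset (WangTile C)) :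
    (∃ g : ℕ × ℕ → WangTile C, IsNTiling W g ∧ YRecurrent g) ↔
      (∃ f : ℤ × ℤ → WangTile C, IsZTiling W f ∧ PeriodicTiling f) := by
  constructor
  · rintro ⟨g, hg, hrec⟩
    exact hg.exists_periodic_of_yRecurrent hrec
  · rintro ⟨f, hf, hper⟩
    obtain ⟨f', p, hp, hf', hper'⟩ := hf.exists_periodic_horizontal hper
    exact hf'.exists_yRecurrent_of_periodic hp hper'
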